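/- arXiv:1707.06678 — 12 statements merged into one kernel-verified Lean document; each statement's English description precedes it below -/
import Mathlib

section
/- Let p be a prime with p ≡ 5 or p ≡ 7 (mod 12). If p divides d and the p-adic valuation of d is not divisible by n (with n ≥ 2), then the equation (x+1)² + ... + (x+d)² = yⁿ has no integer solutions x, y. -/
/-!
Multiplying by 6, the sum of the squares of `x + 1, …, x + d` is `d * N / 6` with
`6 * N = (6x + 3d + 3)² + 3(d² - 1)`. When `p ∣ d` this makes `6 * N ≡ (6x + 3)² - 3 (mod p)`, and
by quadratic reciprocity `3` is not a square modulo `p ≡ ±5 (mod 12)`, so `p ∤ N`. Since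
also `p ∤ 6`, comparing `p`-adic valuations in `6 * yⁿ = d * N` gives `n ∣ v_p(d)`.
-/

lemma six_mul_sum_range_sq (x : ℤ) (d : ℕ) :
    6 * ∑ i ∈ Finset.range d, (x + (i : ℤ) + 1) ^ 2 =
      d * (6 * x ^ 2 + 6 * (d + 1) * x + (d + 1) * (2 * d + 1)) := by
  induction d with
  | zero => simp
  | succ k ih =>
    rw [Finset.sum_range_succ, mul_add, ih]
    push_cast
    ring

lemma isSquare_three_of_dvd_of_dvd {p d : ℕ} {x : ℤ} (hpd : p ∣ d)
    (hpN : (p : ℤ) ∣ 6 * x ^ 2 + 6 * (d + 1) * x + (d + 1) * (2 * d + 1)) :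
    IsSquare (3 : ZMod p) := by
  have hd : (d : ZMod p) = 0 := (ZMod.natCast_eq_zero_iff d p).mpr hpd
  have hN := (ZMod.intCast_zmod_eq_zero_iff_dvd _ p).mpr hpN
  push_cast at hN
  refine ⟨6 * x + 3, ?_⟩
  linear_combination (-6 : ZMod p) * hN + (36 * (x : ZMod p) + 12 * d + 18) * hd

lemma ZMod.not_isSquare_three_of_mod_twelve {p : ℕ} [Fact p.Prime]
    (hmod : p % 12 = 5 ∨ p % 12 = 7) : ¬ IsSquare (3 : ZMod p) := by
  have hp3 : ((p : ℕ) : ZMod 3) = ((p % 3 : ℕ) : ZMod 3) := (ZMod.natCast_mod p 3).symm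
  rw [show (3 : ZMod p) = ((3 : ℕ) : ZMod p) by norm_num]
  rcases hmod with h | h
  · rw [ZMod.exists_sq_eq_prime_iff_of_mod_four_eq_one (by omega) (by norm_num), hp3,
      show p % 3 = 2 by omega]
    decide
  · rw [ZMod.exists_sq_eq_prime_iff_of_mod_four_eq_three (by omega) (by norm_num) (by omega),
      hp3, show p % 3 = 1 by omega, not_not]
    decide

lemma dvd_padicValNat_of_mul_pow_eq_mul {p d n : ℕ} [Fact p.Prime] {a b y : ℤ}
    (ha : ¬ (p : ℤ) ∣ a) (hb : ¬ (p : ℤ) ∣ b) (hd : d ≠ 0) (h : a * y ^ n = d * b) :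
    n ∣ padicValNat p d := by
  have ha0 : a ≠ 0 := by rintro rfl; exact ha (dvd_zero _)
  have hb0 : b ≠ 0 := by rintro rfl; exact hb (dvd_zero _)
  have hd0 : (d : ℤ) ≠ 0 := by exact_mod_cast hd
  have hyn : y ^ n ≠ 0 := right_ne_zero_of_mul (h ▸ mul_ne_zero hd0 hb0)
  have hval := congrArg (padicValInt p) h
  rw [padicValInt.mul ha0 hyn, padicValInt.mul hd0 hb0,
    padicValInt.eq_zero_of_not_dvd ha, padicValInt.eq_zero_of_not_dvd hb,
    padicValInt.of_nat, padicValInt, Int.natAbs_pow, padicValNat.pow] at hval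
  exact ⟨padicValNat p y.natAbs, by omega⟩

theorem no_solutions_of_prime_five_mod_twelve_general (p d n : ℕ) (hp : p.Prime)
    (hmod : p % 12 = 5 ∨ p % 12 = 7) (hpd : p ∣ d)
    (hval : ¬ n ∣ padicValNat p d) :
    ¬ ∃ (x y : ℤ), ∑ i ∈ Finset.range d, (x + (i : ℤ) + 1) ^ 2 = y ^ n := by
  have : Fact p.Prime := ⟨hp⟩
  rintro ⟨x, y, hxy⟩
  have hd : d ≠ 0 := by rintro rfl; simp at hval
  have hp6 : ¬ (p : ℤ) ∣ 6 := by
    intro h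
    have hle : p ≤ 6 := Nat.le_of_dvd (by norm_num) (by exact_mod_cast h)
    interval_cases p <;> omega
  have hpN := mt (isSquare_three_of_dvd_of_dvd (x := x) hpd)
    (ZMod.not_isSquare_three_of_mod_twelve hmod)
  exact hval (dvd_padicValNat_of_mul_pow_eq_mul hp6 hpN hd (hxy ▸ six_mul_sum_range_sq x d))

/-- Lemma of Zhang and Bai: if a prime `p ≡ ±5 (mod 12)` divides `d` and the
`p`-adic valuation of `d` is not divisible by `n ≥ 2`, then the sum of `d`
consecutive squares is never an `n`-th power. -/
theorem no_solutions_of_prime_five_mod_twelve (p d n : ℕ) (hp : p.Prime)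
    (hmod : p % 12 = 5 ∨ p % 12 = 7) (hd : 0 < d) (hpd : p ∣ d)
    (hval : ¬ n ∣ padicValNat p d) (hn : 2 ≤ n) :
    ¬ ∃ (x y : ℤ), ∑ i ∈ Finset.range d, (x + (i : ℤ) + 1) ^ 2 = y ^ n :=
  no_solutions_of_prime_five_mod_twelve_general p d n hp hmod hpd hval
end

section
/- The equation (x+1)² + ... + (x+5)² = yⁿ has no integer solutions for n ≥ 2. -/
/-- The sum of 5 consecutive squares is never a perfect `n`-th power, `n ≥ 2`. -/
theorem no_power_sum_five_consecutive_squares (n : ℕ) (hn : 2 ≤ n) (x y : ℤ) :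
    ∑ i ∈ Finset.range 5, (x + (i : ℤ) + 1) ^ 2 ≠ y ^ n := by
  intro h
  have hsum : (5 : ℤ) * (x ^ 2 + 6 * x + 11) = y ^ n := by
    rw [← h]; simp [Finset.sum_range_succ]; ring
  have h5 : (5 : ℤ) ∣ y ^ n := ⟨_, hsum.symm⟩
  have hp : Prime (5 : ℤ) := by norm_num
  have h5y : (5 : ℤ) ∣ y := hp.dvd_of_dvd_pow h5
  have h25 : (25 : ℤ) ∣ y ^ n := by
    obtain ⟨k, rfl⟩ := h5y
    obtain ⟨m, rfl⟩ := Nat.exists_eq_add_of_le hn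
    exact ⟨k ^ 2 * (5 * k) ^ m, by ring⟩
  rw [← hsum] at h25
  have hdvd : (5 : ℤ) ∣ x ^ 2 + 6 * x + 11 := by
    obtain ⟨c, hc⟩ := h25
    exact ⟨c, by linarith⟩
  have hz : ((x ^ 2 + 6 * x + 11 : ℤ) : ZMod 5) = 0 :=
    (ZMod.intCast_zmod_eq_zero_iff_dvd _ _).mpr hdvd
  push_cast at hz
  revert hz
  generalize (x : ZMod 5) = a
  revert a
  decide
end

section
/- The equation (x+1)² + ... + (x+7)² = yⁿ has no integer solutions for n ≥ 2. -/
/-- The sum of 7 consecutive squares is never a perfect `n`-th power, `n ≥ 2`. -/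
theorem no_power_sum_seven_consecutive_squares (n : ℕ) (hn : 2 ≤ n) (x y : ℤ) :
    ∑ i ∈ Finset.range 7, (x + (i : ℤ) + 1) ^ 2 ≠ y ^ n := by
  intro h
  have hsum : ∑ i ∈ Finset.range 7, (x + (i : ℤ) + 1) ^ 2 = 7 * (x ^ 2 + 8 * x + 20) := by
    simp [Finset.sum_range_succ]; ring
  rw [hsum] at h
  have h7 : (7 : ℤ) ∣ y ^ n := ⟨_, h.symm⟩
  have hy : (7 : ℤ) ∣ y := Int.Prime.dvd_pow' (by norm_num) h7
  have h49 : (49 : ℤ) ∣ y ^ n :=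
    dvd_trans (by simpa [pow_two] using mul_dvd_mul hy hy) (pow_dvd_pow y hn)
  rw [← h] at h49
  obtain ⟨c, hc⟩ := h49
  have h7d : (7 : ℤ) ∣ x ^ 2 + 8 * x + 20 := ⟨c, by linarith⟩
  have hz : ((x ^ 2 + 8 * x + 20 : ℤ) : ZMod 7) = 0 :=
    (ZMod.intCast_zmod_eq_zero_iff_dvd _ _).mpr h7d
  push_cast at hz
  generalize (x : ZMod 7) = a at hz
  revert hz a
  decide
end

section
/- The equation (x+1)² + ... + (x+10)² = yⁿ has no integer solutions for n ≥ 2. -/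
/-- The sum of 10 consecutive squares is never a perfect `n`-th power, `n ≥ 2`. -/
theorem no_power_sum_ten_consecutive_squares (n : ℕ) (hn : 2 ≤ n) (x y : ℤ) :
    ∑ i ∈ Finset.range 10, (x + (i : ℤ) + 1) ^ 2 ≠ y ^ n := by
  intro h
  have hsum : 10*x^2 + 110*x + 385 = y ^ n := by
    rw [← h]; simp [Finset.sum_range_succ]; ring
  have h5 : (5:ℤ) ∣ y := by
    have hd : (5:ℤ) ∣ y^n := ⟨2*x^2+22*x+77, by linarith⟩
    exact Int.Prime.dvd_pow' (by norm_num) hd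
  obtain ⟨k, rfl⟩ := h5
  have h25 : (25:ℤ) ∣ 10*x^2+110*x+385 := by
    rw [hsum]
    obtain ⟨m, rfl⟩ := Nat.exists_eq_add_of_le hn
    exact ⟨(5*k)^m * k^2, by ring⟩
  have hz : ((10*x^2+110*x+385 : ℤ) : ZMod 25) = 0 :=
    (ZMod.intCast_zmod_eq_zero_iff_dvd _ 25).mpr h25
  push_cast at hz
  revert hz
  generalize (x : ZMod 25) = z
  revert z
  decide
end

section
/- Suppose d is a positive integer with r = ord₂(d) ≥ 2, and x, y, n are integers with n ≥ 2 satisfying (x+1)² + ... + (x+d)² = yⁿ. Then n divides r − 1. -/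
/-!
Multiplying by 12, `12 · ∑_{i<d} (x+i+1)² = d · (3t² + d² − 1)` with `t = 2x + d + 1`.
When `d` is even, `t` is odd, so `3t² + d² − 1 ≡ 2 (mod 4)` has 2-adic valuation exactly 1; hence
the sum has 2-adic valuation `ord₂(d) + 1 − 2 = ord₂(d) − 1`. For a perfect `n`-th power this
valuation is a multiple of `n`.
-/

lemma twelve_mul_sum_range_sq (d : ℕ) (x : ℤ) :
    12 * ∑ i ∈ Finset.range d, (x + (i : ℤ) + 1) ^ 2
      = d * (3 * (2 * x + d + 1) ^ 2 + (d : ℤ) ^ 2 - 1) := by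
  induction d with
  | zero => simp
  | succ k ih => rw [Finset.sum_range_succ, mul_add, ih]; push_cast; ring

lemma padicValInt_two_eq_one_of_emod_four_eq_two {a : ℤ} (ha : a % 4 = 2) :
    padicValInt 2 a = 1 := by
  obtain ⟨k, rfl⟩ : ∃ k, a = (2 * k + 1) * ((2 : ℕ) : ℤ) := ⟨a / 4, by push_cast; omega⟩
  have hodd : ¬((2 : ℕ) : ℤ) ∣ 2 * k + 1 := by omega
  rw [padicValInt_mul_eq_succ _ (by omega), padicValInt.eq_zero_of_not_dvd hodd]

lemma three_mul_sq_add_sq_sub_one_emod_four {t e : ℤ} (ht : Odd t) (he : Even e) :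
    (3 * t ^ 2 + e ^ 2 - 1) % 4 = 2 := by
  obtain ⟨k, rfl⟩ := ht
  obtain ⟨m, rfl⟩ := he
  have : 3 * (2 * k + 1) ^ 2 + (m + m) ^ 2 - 1 = 4 * (3 * k ^ 2 + 3 * k + m ^ 2) + 2 := by ring
  omega

lemma padicValInt_pow {p : ℕ} [Fact p.Prime] (y : ℤ) (n : ℕ) :
    padicValInt p (y ^ n) = n * padicValInt p y := by
  rw [padicValInt, Int.natAbs_pow, padicValNat.pow, padicValInt]

lemma padicValInt_two_sum_range_sq {d : ℕ} (hd : d ≠ 0) (heven : 2 ∣ d) (x : ℤ) :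
    padicValInt 2 (∑ i ∈ Finset.range d, (x + (i : ℤ) + 1) ^ 2) = padicValNat 2 d - 1 := by
  set S := ∑ i ∈ Finset.range d, (x + (i : ℤ) + 1) ^ 2
  set E : ℤ := 3 * (2 * x + d + 1) ^ 2 + (d : ℤ) ^ 2 - 1
  have hsum : 12 * S = d * E := twelve_mul_sum_range_sq d x
  have hE : E % 4 = 2 := by
    have hd2 : Even (d : ℤ) := by exact_mod_cast even_iff_two_dvd.mpr heven
    exact three_mul_sq_add_sq_sub_one_emod_four (by simpa [parity_simps] using hd2) hd2
  have hE0 : E ≠ 0 := by omega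
  have hd0 : (d : ℤ) ≠ 0 := by exact_mod_cast hd
  have hS0 : S ≠ 0 := by
    intro hS
    rw [hS, mul_zero] at hsum
    exact mul_ne_zero hd0 hE0 hsum.symm
  have hval := congrArg (padicValInt 2) hsum
  rw [padicValInt.mul (by norm_num) hS0, padicValInt.mul hd0 hE0,
    padicValInt_two_eq_one_of_emod_four_eq_two hE, padicValInt.of_nat] at hval
  have h12 : padicValInt 2 12 = 2 := by
    rw [show (12 : ℤ) = 6 * ((2 : ℕ) : ℤ) by norm_num, padicValInt_mul_eq_succ _ (by norm_num),
      padicValInt_two_eq_one_of_emod_four_eq_two (by norm_num)]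
  omega

theorem exponent_divides_of_two_adic_valuation_general (d : ℕ)
    (hr : 2 ≤ padicValNat 2 d) (n : ℕ) (x y : ℤ)
    (h : ∑ i ∈ Finset.range d, (x + (i : ℤ) + 1) ^ 2 = y ^ n) :
    n ∣ padicValNat 2 d - 1 := by
  have hd : d ≠ 0 := by rintro rfl; simp at hr
  have heven : 2 ∣ d := dvd_of_one_le_padicValNat (by omega)
  rw [← padicValInt_two_sum_range_sq hd heven x, h, padicValInt_pow]
  exact dvd_mul_right n _

/-- If `r = ord₂(d) ≥ 2` and the sum of `d` consecutive squares is `y^n` with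
`n ≥ 2`, then `n ∣ r - 1`. -/
theorem exponent_divides_of_two_adic_valuation (d : ℕ) (hd : 0 < d)
    (hr : 2 ≤ padicValNat 2 d) (n : ℕ) (hn : 2 ≤ n) (x y : ℤ)
    (h : ∑ i ∈ Finset.range d, (x + (i : ℤ) + 1) ^ 2 = y ^ n) :
    n ∣ padicValNat 2 d - 1 :=
  exponent_divides_of_two_adic_valuation_general d hr n x y h
end

section
/- The equation (x+1)² + ... + (x+9)² = yⁿ has no integer solutions for n ≥ 2. -/
/-- The sum of 9 consecutive squares is never a perfect `n`-th power, `n ≥ 2`. -/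
theorem no_power_sum_nine_consecutive_squares (n : ℕ) (hn : 2 ≤ n) (x y : ℤ) :
    ∑ i ∈ Finset.range 9, (x + (i : ℤ) + 1) ^ 2 ≠ y ^ n := by
  intro h
  have hsum : ∑ i ∈ Finset.range 9, (x + (i : ℤ) + 1) ^ 2 = 9*x^2 + 90*x + 285 := by
    simp [Finset.sum_range_succ]; ring
  rw [hsum] at h
  have h3 : (3:ℤ) ∣ y ^ n := ⟨3*x^2 + 30*x + 95, by linarith⟩
  have hy : (3:ℤ) ∣ y := Int.Prime.dvd_pow' (by norm_num) h3
  have h9 : (9:ℤ) ∣ y ^ n := by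
    obtain ⟨k, hk⟩ := hy
    have : y ^ n = 9 * (k^2 * y^(n-2)) := by
      have : y ^ n = y^2 * y^(n-2) := by
        rw [← pow_add]; congr 1; omega
      rw [this, hk]; ring
    exact ⟨_, this⟩
  rw [← h] at h9
  obtain ⟨k, hk⟩ := h9
  omega
end

section
/- The equation (x+1)² + ... + (x+8)² = yⁿ has no integer solutions for n ≥ 3. -/
/-- The sum of 8 consecutive squares is never a perfect `n`-th power, `n ≥ 3`. -/
theorem no_power_sum_eight_consecutive_squares (n : ℕ) (hn : 3 ≤ n) (x y : ℤ) :
    ∑ i ∈ Finset.range 8, (x + (i : ℤ) + 1) ^ 2 ≠ y ^ n := by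
  intro h
  have hsum : ∑ i ∈ Finset.range 8, (x + (i : ℤ) + 1) ^ 2 = 8 * x ^ 2 + 72 * x + 204 := by
    simp [Finset.sum_range_succ]; ring
  rw [hsum] at h
  rcases Int.even_or_odd y with he | ho
  · obtain ⟨k, hk⟩ := he
    have h8 : (8 : ℤ) ∣ y ^ n := by
      have : (2 : ℤ) ^ 3 ∣ y ^ n := by
        calc (2 : ℤ) ^ 3 ∣ (2 : ℤ) ^ n := pow_dvd_pow 2 hn
        _ ∣ y ^ n := pow_dvd_pow_of_dvd ⟨k, by omega⟩ n
      simpa using this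
    rw [← h] at h8
    obtain ⟨c, hc⟩ := h8
    have hc' : 8 * x ^ 2 + 72 * x + 204 = 8 * c := hc
    generalize x ^ 2 = t at hc'
    omega
  · have hodd : Odd (y ^ n) := ho.pow
    rw [← h] at hodd
    obtain ⟨m, hm⟩ := hodd
    generalize x ^ 2 = t at hm
    omega
end

section
/- The integer solutions of (x+1)² + (x+2)² = y² are exactly those with 2x + 3 + y√2 = ±(1+√2)^(2r+1) for some integer r; equivalently, (2x+3)² − 2y² = −1 and all integer solutions (u, y) of u² − 2y² = −1 arise as u + y√2 = ±(1+√2)^(2r+1). -/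
/-!
The unit `ε = 1 + √2` of `ℤ√2` has norm `-1`, so multiplication by `ε` carries the solutions of
`u² - 2y² = -1` bijectively onto those of the Pell equation `x² - 2y² = 1`. These are
`±(3 + 2√2)ⁿ = ±ε²ⁿ`, as `3 + 2√2` is the fundamental solution; hence the solutions of the
negative equation are `±ε²ⁿ⁻¹`. The substitution `u = 2x + 3` turns
`(x + 1)² + (x + 2)² = y²` into `u² - 2y² = -1`.
-/

open Pell

theorem map_units_zpow {M G F : Type*} [Monoid M] [DivisionMonoid G] [FunLike F M G]
    [MonoidHomClass F M G] (f : F) (u : Mˣ) (k : ℤ) : f ↑(u ^ k) = f ↑u ^ k :=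
  (congrArg Units.val (map_zpow (Units.map (f : M →* G)) u k)).trans
    (Units.val_zpow_eq_zpow_val _ k)

namespace Zsqrtd

variable {d : ℤ}

theorem norm_units_zpow_of_odd {ε : (ℤ√d)ˣ} (hε : (ε : ℤ√d).norm = -1) {k : ℤ} (hk : Odd k) :
    ((ε ^ k : (ℤ√d)ˣ) : ℤ√d).norm = -1 := by
  have hε' : Units.map normMonoidHom ε = -1 := Units.ext hε
  exact congrArg Units.val (show Units.map normMonoidHom (ε ^ k) = -1 by
    rw [map_zpow, hε', hk.neg_one_zpow])

theorem norm_eq_neg_one_iff_of_isFundamental {ε : (ℤ√d)ˣ} (hε : (ε : ℤ√d).norm = -1)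
    {a₁ : Solution₁ d} (ha₁ : IsFundamental a₁) (hεa₁ : (a₁ : ℤ√d) = ε ^ 2) (a : ℤ√d) :
    a.norm = -1 ↔ ∃ r : ℤ, a = ↑(ε ^ (2 * r + 1)) ∨ a = -↑(ε ^ (2 * r + 1)) := by
  constructor
  · intro ha
    let toUnits : Solution₁ d →* (ℤ√d)ˣ := Unitary.toUnits
    have hb : a * ε ∈ unitary (ℤ√d) :=
      norm_eq_one_iff_mem_unitary.mp (by rw [norm_mul, ha, hε]; norm_num)
    have hpow (n : ℤ) : ((toUnits (a₁ ^ n) : (ℤ√d)ˣ) : ℤ√d) * ↑ε⁻¹ =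
        ↑(ε ^ (2 * (n - 1) + 1)) := by
      rw [map_zpow, show toUnits a₁ = ε ^ 2 from Units.ext hεa₁, ← zpow_natCast, ← zpow_mul,
        ← Units.val_mul, ← zpow_neg_one, ← zpow_add]
      ring_nf
    have hcancel : a = a * ε * ↑ε⁻¹ := by rw [mul_assoc, Units.mul_inv, mul_one]
    obtain ⟨n, hn | hn⟩ := ha₁.eq_zpow_or_neg_zpow ⟨a * ε, hb⟩
    · refine ⟨n - 1, Or.inl ?_⟩
      rw [hcancel, ← hpow, ← hn]
      rfl
    · refine ⟨n - 1, Or.inr ?_⟩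
      rw [hcancel, ← hpow, ← neg_mul]
      exact congrArg (· * _) (congrArg Subtype.val hn)
  · rintro ⟨r, rfl | rfl⟩
    · exact norm_units_zpow_of_odd hε (odd_two_mul_add_one r)
    · rw [norm_neg]
      exact norm_units_zpow_of_odd hε (odd_two_mul_add_one r)

def onePlusSqrtTwo : (ℤ√2)ˣ where
  val := ⟨1, 1⟩
  inv := ⟨-1, 1⟩
  val_inv := by decide
  inv_val := by decide

end Zsqrtd

namespace Pell

theorem isFundamental_three_two : IsFundamental (Solution₁.mk (d := 2) 3 2 (by norm_num)) := by
  refine ⟨by norm_num, by norm_num, fun {b} hb => ?_⟩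
  have hb' := b.prop
  simp only [Solution₁.x_mk] at hb ⊢
  by_contra! hlt
  rw [show b.x = 2 by omega] at hb'
  omega

end Pell

open Zsqrtd in
theorem sq_sub_two_mul_sq_eq_neg_one_iff (u y : ℤ) :
    u ^ 2 - 2 * y ^ 2 = -1 ↔
      ∃ r : ℤ, (u : ℝ) + (y : ℝ) * Real.sqrt 2 = (1 + Real.sqrt 2) ^ (2 * r + 1) ∨
        (u : ℝ) + (y : ℝ) * Real.sqrt 2 = -((1 + Real.sqrt 2) ^ (2 * r + 1)) := by
  have h2 : (0 : ℤ) ≤ 2 := by norm_num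
  have hinj := toReal_injective h2 fun n hn => isFundamental_three_two.d_nonsquare ⟨n, hn⟩
  have hsq : (Solution₁.mk (d := 2) 3 2 (by norm_num) : ℤ√2) = onePlusSqrtTwo ^ 2 := by decide
  have huy : toReal h2 ⟨u, y⟩ = u + y * Real.sqrt 2 := by simp [toReal_apply]
  have hε : toReal h2 onePlusSqrtTwo = 1 + Real.sqrt 2 := by simp [toReal_apply, onePlusSqrtTwo]
  rw [show u ^ 2 - 2 * y ^ 2 = (⟨u, y⟩ : ℤ√2).norm by rw [norm_def]; ring,
    norm_eq_neg_one_iff_of_isFundamental (by decide) isFundamental_three_two hsq]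
  simp only [← hinj.eq_iff, map_neg, map_units_zpow, huy, hε]

/-- The integer solutions of `(x+1)² + (x+2)² = y²` are exactly those with
`2x + 3 + y√2 = ±(1+√2)^(2r+1)` for some integer `r`; equivalently, setting
`u = 2x+3`, the equation becomes `u² − 2y² = −1`, whose integer solutions
`(u, y)` are exactly those with `u + y√2 = ±(1+√2)^(2r+1)`. -/
theorem two_consecutive_squares_eq_square :
    (∀ x y : ℤ, (x + 1) ^ 2 + (x + 2) ^ 2 = y ^ 2 ↔
      ∃ r : ℤ, ((2 * x + 3 : ℤ) : ℝ) + (y : ℝ) * Real.sqrt 2 =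
          (1 + Real.sqrt 2) ^ (2 * r + 1) ∨
        ((2 * x + 3 : ℤ) : ℝ) + (y : ℝ) * Real.sqrt 2 =
          -((1 + Real.sqrt 2) ^ (2 * r + 1))) ∧
    (∀ u y : ℤ, u ^ 2 - 2 * y ^ 2 = -1 ↔
      ∃ r : ℤ, (u : ℝ) + (y : ℝ) * Real.sqrt 2 = (1 + Real.sqrt 2) ^ (2 * r + 1) ∨
        (u : ℝ) + (y : ℝ) * Real.sqrt 2 = -((1 + Real.sqrt 2) ^ (2 * r + 1))) := by
  refine ⟨fun x y => ?_, sq_sub_two_mul_sq_eq_neg_one_iff⟩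
  rw [← sq_sub_two_mul_sq_eq_neg_one_iff]
  constructor <;> intro h <;> linarith
end

section
/- The equation (x+1)² + ... + (x+6)² = y² has no integer solutions. -/
/-- The sum of 6 consecutive squares is never a perfect square. -/
theorem no_square_sum_six_consecutive_squares (x y : ℤ) :
    ∑ i ∈ Finset.range 6, (x + (i : ℤ) + 1) ^ 2 ≠ y ^ 2 := by
  simp only [Finset.sum_range_succ, Finset.sum_range_zero]
  push_cast
  intro h
  have h4 : ((6 * x ^ 2 + 42 * x + 91 : ℤ) : ZMod 4) = ((y ^ 2 : ℤ) : ZMod 4) := by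
    rw [show (6 * x ^ 2 + 42 * x + 91 : ℤ) = 0 + (x + 0 + 1) ^ 2 + (x + 1 + 1) ^ 2
      + (x + 2 + 1) ^ 2 + (x + 3 + 1) ^ 2 + (x + 4 + 1) ^ 2 + (x + 5 + 1) ^ 2 by ring, h]
  push_cast at h4
  revert h4
  generalize (x : ZMod 4) = a
  generalize (y : ZMod 4) = b
  revert a b
  decide
end

section
/- If X, y are integers with X² + 105 = 6yᵖ for an odd prime p, then y is coprime to 2, 3, 5, and 7. -/
/-- If `X² + 105 = 6yᵖ` for an odd prime `p`, then `y` is coprime to `2, 3, 5, 7`. -/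
theorem y_coprime_of_d_six (X y : ℤ) (p : ℕ) (hp : p.Prime) (hodd : Odd p)
    (h : X ^ 2 + 105 = 6 * y ^ p) :
    IsCoprime y 2 ∧ IsCoprime y 3 ∧ IsCoprime y 5 ∧ IsCoprime y 7 := by
  have hp2 : p ≠ 2 := by rintro rfl; exact (Nat.not_odd_iff_even.mpr (by norm_num)) hodd
  have hp3 : 3 ≤ p := by have := hp.two_le; omega
  have key : ∀ q : ℤ, q ∣ y → q ^ 3 ∣ X ^ 2 + 105 := by
    intro q hqy
    rw [h]
    exact Dvd.dvd.mul_left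
      (dvd_trans (pow_dvd_pow_of_dvd hqy 3) (pow_dvd_pow y hp3)) 6
  have odd_case : ∀ q : ℤ, Prime q → q ∣ 105 → ¬ q ∣ y := by
    intro q hq h105 hqy
    have h3 := key q hqy
    have hq2 : q ^ 2 ∣ X ^ 2 + 105 := dvd_trans (pow_dvd_pow q (by norm_num)) h3
    have hqX2 : q ∣ X ^ 2 := by
      have h1 : q ∣ X ^ 2 + 105 := dvd_trans (dvd_pow_self q (by norm_num : 2 ≠ 0)) hq2
      exact (dvd_add_right h105).mp (by rwa [add_comm] at h1)
    have hqX : q ∣ X := hq.dvd_of_dvd_pow hqX2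
    have hq2X2 : q ^ 2 ∣ X ^ 2 := pow_dvd_pow_of_dvd hqX 2
    have hd : q ^ 2 ∣ 105 := (dvd_add_right hq2X2).mp hq2
    have hn : q.natAbs ^ 2 ∣ 105 := by
      have : (q ^ 2).natAbs ∣ (105 : ℤ).natAbs := Int.natAbs_dvd_natAbs.mpr hd
      simpa [Int.natAbs_pow] using this
    have hqd : q.natAbs ∣ 105 := by
      have : q.natAbs ∣ (105 : ℤ).natAbs := Int.natAbs_dvd_natAbs.mpr h105
      simpa using this
    have hq1 : 1 < q.natAbs := (Int.prime_iff_natAbs_prime.mp hq).one_lt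
    have h105lt : q.natAbs ≤ 105 := Nat.le_of_dvd (by norm_num) hqd
    interval_cases hqn : q.natAbs <;> omega
  have h2 : ¬ (2 : ℤ) ∣ y := by
    intro hy
    have h8 : (8 : ℤ) ∣ X ^ 2 + 105 := by
      have := key 2 hy; norm_num at this; exact this
    have hz : ((X : ZMod 8) ^ 2 + 105 = 0) := by
      have : ((X ^ 2 + 105 : ℤ) : ZMod 8) = 0 :=
        (ZMod.intCast_zmod_eq_zero_iff_dvd _ 8).mpr h8
      push_cast at this
      simpa using this
    revert hz
    generalize (X : ZMod 8) = a
    revert a; decide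
  refine ⟨((Int.prime_two.coprime_iff_not_dvd).mpr h2).symm,
    ((?_ : Prime (3:ℤ)).coprime_iff_not_dvd.mpr (odd_case 3 ?_ (by norm_num))).symm,
    ((?_ : Prime (5:ℤ)).coprime_iff_not_dvd.mpr (odd_case 5 ?_ (by norm_num))).symm,
    ((?_ : Prime (7:ℤ)).coprime_iff_not_dvd.mpr (odd_case 7 ?_ (by norm_num))).symm⟩ <;>
  norm_num
end

section
/- For p = 3, the equation (u + ε√(−105))³ − (u − ε√(−105))³ = (√6)³·√(−70) with ε = ±1 has no integer solution u. -/
/-- For `p = 3`, the equation `(u + ε√(−105))³ − (u − ε√(−105))³ = (√6)³·√(−70)`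
with `ε = ±1` has no integer solution `u`. (Here `√(−105) = i√105` and
`√(−70) = i√70` in `ℂ`.) -/
theorem no_solution_cubic_case (u : ℤ) (ε : ℤ) (hε : ε = 1 ∨ ε = -1) :
    ((u : ℂ) + (ε : ℂ) * (Complex.I * (Real.sqrt 105 : ℂ))) ^ 3 -
        ((u : ℂ) - (ε : ℂ) * (Complex.I * (Real.sqrt 105 : ℂ))) ^ 3 ≠
      ((Real.sqrt 6 : ℝ) : ℂ) ^ 3 * (Complex.I * (Real.sqrt 70 : ℂ)) := by
  have h6 : Real.sqrt 6 ^ 2 = 6 := Real.sq_sqrt (by norm_num)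
  have h105 : Real.sqrt 105 ^ 2 = 105 := Real.sq_sqrt (by norm_num)
  have h1 : Real.sqrt 6 * Real.sqrt 70 = Real.sqrt 420 := by
    rw [← Real.sqrt_mul (by norm_num)]; norm_num
  have h2 : Real.sqrt 420 = 2 * Real.sqrt 105 := by
    rw [show (420:ℝ) = 2^2 * 105 by norm_num, Real.sqrt_mul (by positivity),
      Real.sqrt_sq (by norm_num)]
  have key : Real.sqrt 6 ^ 3 * Real.sqrt 70 = 12 * Real.sqrt 105 := by
    calc Real.sqrt 6 ^ 3 * Real.sqrt 70
        = Real.sqrt 6 ^ 2 * (Real.sqrt 6 * Real.sqrt 70) := by ring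
      _ = 6 * (2 * Real.sqrt 105) := by rw [h6, h1, h2]
      _ = 12 * Real.sqrt 105 := by ring
  have keyC : ((Real.sqrt 6 : ℝ):ℂ) ^ 3 * ((Real.sqrt 70 : ℝ):ℂ)
      = 12 * ((Real.sqrt 105 : ℝ):ℂ) := by exact_mod_cast key
  have h105C : ((Real.sqrt 105 : ℝ):ℂ) ^ 2 = 105 := by exact_mod_cast h105
  have hI : Complex.I ^ 2 = -1 := Complex.I_sq
  have hS : ((Real.sqrt 105 : ℝ):ℂ) ≠ 0 := by
    exact_mod_cast (Real.sqrt_pos.mpr (by norm_num : (0:ℝ) < 105)).ne'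
  have hsq : ∀ x : ZMod 5, x ^ 2 ≠ 37 ∧ x ^ 2 ≠ 33 := by decide
  intro h
  rcases hε with rfl | rfl
  · have h3 : Complex.I * ((Real.sqrt 105 : ℝ):ℂ) * (6 * (u:ℂ)^2 - 222) = 0 := by
      push_cast at h ⊢
      linear_combination h + Complex.I * keyC + (-210 * Complex.I * ((Real.sqrt 105 : ℝ):ℂ)) * hI
        + (-2 * Complex.I ^ 3 * ((Real.sqrt 105 : ℝ):ℂ)) * h105C
    have h4 : (6 * (u:ℂ)^2 - 222) = 0 := by
      rcases mul_eq_zero.mp h3 with h5 | h5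
      · exact absurd (mul_eq_zero.mp h5) (by simp [Complex.I_ne_zero, hS])
      · exact h5
    have h5 : u ^ 2 = 37 := by
      have hc : ((u:ℂ))^2 = 37 := by linear_combination h4 / 6
      exact_mod_cast hc
    exact (hsq (u : ZMod 5)).1 (by exact_mod_cast congrArg (Int.cast : ℤ → ZMod 5) h5)
  · have h3 : Complex.I * ((Real.sqrt 105 : ℝ):ℂ) * (6 * (u:ℂ)^2 - 198) = 0 := by
      push_cast at h ⊢
      linear_combination -h - Complex.I * keyC + (-210 * Complex.I * ((Real.sqrt 105 : ℝ):ℂ)) * hI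
        + (-2 * Complex.I ^ 3 * ((Real.sqrt 105 : ℝ):ℂ)) * h105C
    have h4 : (6 * (u:ℂ)^2 - 198) = 0 := by
      rcases mul_eq_zero.mp h3 with h5 | h5
      · exact absurd (mul_eq_zero.mp h5) (by simp [Complex.I_ne_zero, hS])
      · exact h5
    have h5 : u ^ 2 = 33 := by
      have hc : ((u:ℂ))^2 = 33 := by linear_combination h4 / 6
      exact_mod_cast hc
    exact (hsq (u : ZMod 5)).2 (by exact_mod_cast congrArg (Int.cast : ℤ → ZMod 5) h5)
end

section
/- For p = 5, the equation (u + ε√(−105))⁵ − (u − ε√(−105))⁵ = (√6)⁵·√(−70) with ε = ±1 has no integer solution u. -/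
/-- For `p = 5`, the equation `(u + ε√(−105))⁵ − (u − ε√(−105))⁵ = (√6)⁵·√(−70)`
with `ε = ±1` has no integer solution `u`. -/
theorem no_solution_quintic_case (u : ℤ) (ε : ℤ) (hε : ε = 1 ∨ ε = -1) :
    ((u : ℂ) + (ε : ℂ) * (Complex.I * (Real.sqrt 105 : ℂ))) ^ 5 -
        ((u : ℂ) - (ε : ℂ) * (Complex.I * (Real.sqrt 105 : ℂ))) ^ 5 ≠
      ((Real.sqrt 6 : ℝ) : ℂ) ^ 5 * (Complex.I * (Real.sqrt 70 : ℂ)) := by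
  intro h
  have h105 : (Real.sqrt 105 : ℝ) ^ 2 = 105 := Real.sq_sqrt (by norm_num)
  have h6 : (Real.sqrt 6 : ℝ) ^ 2 = 6 := Real.sq_sqrt (by norm_num)
  have hmul : Real.sqrt 6 * Real.sqrt 70 = 2 * Real.sqrt 105 := by
    rw [← Real.sqrt_mul (by norm_num) 70, show (6 * 70 : ℝ) = 2 ^ 2 * 105 by norm_num,
      Real.sqrt_mul (by positivity) 105, Real.sqrt_sq (by norm_num : (0:ℝ) ≤ 2)]
  have hrhs : Real.sqrt 6 ^ 5 * Real.sqrt 70 = 72 * Real.sqrt 105 := by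
    have e : Real.sqrt 6 ^ 5 * Real.sqrt 70
        = (Real.sqrt 6 ^ 2) ^ 2 * (Real.sqrt 6 * Real.sqrt 70) := by ring
    rw [e, h6, hmul]; ring
  have hS2 : ((Real.sqrt 105 : ℝ) : ℂ) ^ 2 = 105 := by
    rw [← Complex.ofReal_pow, h105]; norm_num
  have hε2 : ((ε : ℤ) : ℂ) ^ 2 = 1 := by
    rcases hε with h' | h' <;> subst h' <;> norm_num
  have hrhsC : ((Real.sqrt 6 : ℝ) : ℂ) ^ 5 * (Complex.I * (Real.sqrt 70 : ℂ))
      = 72 * (Complex.I * (Real.sqrt 105 : ℂ)) := by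
    have := congrArg (Complex.ofReal) hrhs
    push_cast at this
    linear_combination Complex.I * this
  rw [hrhsC] at h
  set S : ℂ := ((Real.sqrt 105 : ℝ) : ℂ) with hSdef
  have hA : ((u : ℂ) + (ε : ℂ) * (Complex.I * S)) ^ 5 -
      ((u : ℂ) - (ε : ℂ) * (Complex.I * S)) ^ 5
      = ((ε * (10 * u ^ 4 - 2100 * u ^ 2 + 22050) : ℤ) : ℂ) * (Complex.I * S) := by
    push_cast
    linear_combination
      ((ε:ℂ) * Complex.I * S * (20*(u:ℂ)^2 + 2*(ε:ℂ)^2*Complex.I^2*S^2 - 210)) *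
        (Complex.I^2 * S^2 * hε2 + S^2 * Complex.I_sq - hS2)
  rw [hA] at h
  have hSne : Complex.I * S ≠ 0 := by
    apply mul_ne_zero Complex.I_ne_zero
    simp only [hSdef, ne_eq, Complex.ofReal_eq_zero]
    positivity
  have hint := mul_right_cancel₀ hSne h
  have hz : ε * (10 * u ^ 4 - 2100 * u ^ 2 + 22050) = 72 := by exact_mod_cast hint
  generalize u ^ 4 = a at hz
  generalize u ^ 2 = b at hz
  rcases hε with h' | h' <;> subst h' <;> omega
end
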